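/- Let p ∈ ℝ² and let λ ⊂ ℝ² be a line. If a1, a2, a3 ∈ λ are three distinct points, then no line of the form ℓ_{x,y} (x,y ∈ ℝ²) intersects all three lines ℓ_{p,a1}, ℓ_{p,a2}, ℓ_{p,a3} in ℝ³. Equivalently, there is no pair (x,y) and no triple of rotations g1,g2,g3 with gi(p) = ai and gi(x) = y for each i. -/

import Mathlib

open Real

/-- Rotation of the plane `ℂ` around center `O` by angle `α`. -/
noncomputable def rot (O : ℂ) (α : ℝ) : ℂ → ℂ :=
  fun z => O + Complex.exp (α * Complex.I) * (z - O)

/-- The line `ℓ_{p,q}`: the set of parametrized rotations `ρ(g) = (o_x,o_y,cot(α/2))`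
taking `p` to `q`. -/
noncomputable def rotSet (p q : ℂ) : Set (ℝ × ℝ × ℝ) :=
  {v | ∃ (O : ℂ) (α : ℝ), 0 < α ∧ α < 2 * π ∧ rot O α p = q ∧
    v = (O.re, O.im, Real.cot (α / 2))}

/-!
A common point of `ℓ_{x,y}` and `ℓ_{p,a}` is one rotation `g` with `g x = y` and `g p = a`,
because `(O, cot (α / 2))` determines `(O, α)` for `0 < α < 2π`. Rotations are isometries,
so `dist y a = dist x p`. If `ℓ_{x,y}` met all three lines `ℓ_{p,aᵢ}`, the point `y` would be
equidistant from the three distinct collinear points `aᵢ`; but a sphere in a strictly convex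
space meets a line in at most two points, since the middle one of three collinear points is
strictly closer to `y` than the farther of the outer two.
-/

theorem Real.cot_eq_tan_pi_div_two_sub (x : ℝ) : cot x = tan (π / 2 - x) := by
  rw [tan_pi_div_two_sub, ← cot_inv_eq_tan, inv_inv]

theorem Real.injOn_cot : Set.InjOn cot (Set.Ioo 0 π) := by
  rintro a ⟨ha₀, haπ⟩ b ⟨hb₀, hbπ⟩ h
  rw [cot_eq_tan_pi_div_two_sub, cot_eq_tan_pi_div_two_sub] at h
  have := injOn_tan ⟨by linarith, by linarith⟩ ⟨by linarith, by linarith⟩ h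
  linarith

theorem Collinear.dist_ne_of_dist_eq {V P : Type*} [NormedAddCommGroup V] [NormedSpace ℝ V]
    [StrictConvexSpace ℝ V] [PseudoMetricSpace P] [NormedAddTorsor V P] {p p₁ p₂ p₃ : P} {r : ℝ}
    (h : Collinear ℝ ({p₁, p₂, p₃} : Set P)) (h₁₂ : p₁ ≠ p₂) (h₁₃ : p₁ ≠ p₃) (h₂₃ : p₂ ≠ p₃)
    (hp₁ : dist p₁ p = r) (hp₃ : dist p₃ p = r) : dist p₂ p ≠ r := by
  intro hp₂
  have hbtw : Sbtw ℝ p₁ p₂ p₃ :=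
    ⟨h.wbtw_of_dist_eq_of_dist_le hp₁ hp₂.le hp₃ h₁₃, h₁₂.symm, h₂₃⟩
  have := hbtw.dist_lt_max_dist p
  rw [hp₁, hp₂, hp₃, max_self] at this
  exact this.false

theorem dist_rot (O : ℂ) (α : ℝ) (z w : ℂ) : dist (rot O α z) (rot O α w) = dist z w := by
  have : rot O α z - rot O α w = Complex.exp (α * Complex.I) * (z - w) := by
    simp only [rot]
    ring
  rw [dist_eq_norm, this, norm_mul, Complex.norm_exp_ofReal_mul_I, one_mul, dist_eq_norm]

theorem exists_rot_of_rotSet_inter_nonempty {x y p a : ℂ}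
    (h : (rotSet x y ∩ rotSet p a).Nonempty) : ∃ O α, rot O α x = y ∧ rot O α p = a := by
  obtain ⟨v, ⟨O, α, hα₀, hα, hxy, rfl⟩, ⟨O', β, hβ₀, hβ, hpa, hv⟩⟩ := h
  simp only [Prod.mk.injEq] at hv
  obtain ⟨hre, him, hcot⟩ := hv
  have hO : O = O' := Complex.ext hre him
  have hαβ : α = β := by
    have := injOn_cot ⟨by linarith, by linarith⟩ ⟨by linarith, by linarith⟩ hcot
    linarith
  subst hO hαβ
  exact ⟨O, α, hxy, hpa⟩

theorem dist_eq_of_rotSet_inter_nonempty {x y p a : ℂ}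
    (h : (rotSet x y ∩ rotSet p a).Nonempty) : dist a y = dist x p := by
  obtain ⟨O, α, rfl, rfl⟩ := exists_rot_of_rotSet_inter_nonempty h
  rw [dist_comm, dist_rot]

/-- If `a1, a2, a3` are three distinct collinear points, then no line `ℓ_{x,y}`
intersects all three lines `ℓ_{p,a1}`, `ℓ_{p,a2}`, `ℓ_{p,a3}`; equivalently there is
no pair `(x,y)` with rotations `gᵢ` satisfying `gᵢ(p) = aᵢ` and `gᵢ(x) = y`. -/
theorem stmt_19 (p a1 a2 a3 : ℂ)
    (h12 : a1 ≠ a2) (h13 : a1 ≠ a3) (h23 : a2 ≠ a3)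
    (hcol : ∃ b d : ℂ, d ≠ 0 ∧ (∃ t : ℝ, a1 = b + (t : ℂ) * d) ∧
      (∃ t : ℝ, a2 = b + (t : ℂ) * d) ∧ (∃ t : ℝ, a3 = b + (t : ℂ) * d)) :
    ¬ ∃ x y : ℂ, (rotSet x y ∩ rotSet p a1).Nonempty ∧
      (rotSet x y ∩ rotSet p a2).Nonempty ∧
      (rotSet x y ∩ rotSet p a3).Nonempty := by
  rintro ⟨x, y, h1, h2, h3⟩
  have hc : Collinear ℝ ({a1, a2, a3} : Set ℂ) := by
    obtain ⟨b, d, -, ht1, ht2, ht3⟩ := hcol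
    refine collinear_iff_exists_forall_eq_smul_vadd _ |>.2 ⟨b, d, ?_⟩
    simp only [Set.mem_insert_iff, Set.mem_singleton_iff, forall_eq_or_imp, forall_eq,
      vadd_eq_add, Complex.real_smul, add_comm _ b]
    exact ⟨ht1, ht2, ht3⟩
  exact hc.dist_ne_of_dist_eq h12 h13 h23 (dist_eq_of_rotSet_inter_nonempty h1)
    (dist_eq_of_rotSet_inter_nonempty h3) (dist_eq_of_rotSet_inter_nonempty h2)
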